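/- arXiv:1310.6534 — 4 statements merged into one kernel-verified Lean document; each statement's English description precedes it below -/
import Mathlib

section
/- If K is an unconditional planar convex body (symmetric with respect to two perpendicular axis-parallel lines through a point z), then its diameter equals twice its circumradius: D(K) = 2R(K). -/
open MeasureTheory Metric Set Filter
open scoped Topology RealInnerProductSpace

noncomputable def perim (K : Set (EuclideanSpace ℝ (Fin 2))) : ℝ :=
  (μH[1] (frontier K)).toReal

noncomputable def circum (K : Set (EuclideanSpace ℝ (Fin 2))) : ℝ :=
  sInf {r : ℝ | ∃ c, K ⊆ Metric.closedBall c r}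

noncomputable def inrad (K : Set (EuclideanSpace ℝ (Fin 2))) : ℝ :=
  sSup {r : ℝ | ∃ c, Metric.closedBall c r ⊆ K}

noncomputable def minWidth (K : Set (EuclideanSpace ℝ (Fin 2))) : ℝ :=
  sInf {w : ℝ | ∃ u : EuclideanSpace ℝ (Fin 2), ‖u‖ = 1 ∧
    w = sSup ((fun x => ⟪u, x⟫) '' K) - sInf ((fun x => ⟪u, x⟫) '' K)}

def LatticeFree (K : Set (EuclideanSpace ℝ (Fin 2))) : Prop :=
  ∀ m n : ℤ, (!₂[(m : ℝ), (n : ℝ)] : EuclideanSpace ℝ (Fin 2)) ∉ interior K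

def Unconditional (K : Set (EuclideanSpace ℝ (Fin 2))) (z : EuclideanSpace ℝ (Fin 2)) : Prop :=
  (∀ x ∈ K, (!₂[x 0, 2 * z 1 - x 1] : EuclideanSpace ℝ (Fin 2)) ∈ K) ∧
  (∀ x ∈ K, (!₂[2 * z 0 - x 0, x 1] : EuclideanSpace ℝ (Fin 2)) ∈ K)

/-! Composing the two axis reflections through `z` gives the point reflection in `z`, so `K` is
centrally symmetric about `z`. A point `x ∈ K` and its mirror image are `2 * dist x z` apart, hence
`K ⊆ closedBall z (D / 2)`, while any ball containing `K` has radius at least `D / 2`. -/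

open AffineIsometryEquiv

section PointReflection

variable {V P : Type*} [SeminormedAddCommGroup V] [NormedSpace ℝ V] [PseudoMetricSpace P]
  [NormedAddTorsor V P]

theorem subset_closedBall_half_diam_of_pointReflection_mem {K : Set P} {z : P}
    (hK : Bornology.IsBounded K) (hsymm : ∀ x ∈ K, pointReflection ℝ z x ∈ K) :
    K ⊆ closedBall z (diam K / 2) := by
  intro x hx
  have h := dist_le_diam_of_mem hK (hsymm x hx) hx
  rw [dist_pointReflection_self, Real.norm_two, dist_comm] at h
  rw [mem_closedBall]
  linarith

theorem isLeast_radius_of_pointReflection_mem {K : Set P} {z : P} (hK : Bornology.IsBounded K)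
    (hne : K.Nonempty) (hsymm : ∀ x ∈ K, pointReflection ℝ z x ∈ K) :
    IsLeast {r : ℝ | ∃ c, K ⊆ closedBall c r} (diam K / 2) := by
  refine ⟨⟨z, subset_closedBall_half_diam_of_pointReflection_mem hK hsymm⟩, ?_⟩
  rintro r ⟨c, hc⟩
  have hr : 0 ≤ r := nonempty_closedBall.1 (hne.mono hc)
  have := (diam_mono hc isBounded_closedBall).trans (diam_closedBall hr)
  linarith

end PointReflection

theorem Unconditional.pointReflection_mem {K : Set (EuclideanSpace ℝ (Fin 2))}
    {z : EuclideanSpace ℝ (Fin 2)} (hunc : Unconditional K z) {x : EuclideanSpace ℝ (Fin 2)}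
    (hx : x ∈ K) : pointReflection ℝ z x ∈ K := by
  convert hunc.2 _ (hunc.1 x hx) using 1
  ext i
  fin_cases i <;> simp [pointReflection_apply] <;> ring

theorem stmt_1_general (K : Set (EuclideanSpace ℝ (Fin 2))) (z : EuclideanSpace ℝ (Fin 2))
    (hK : IsCompact K) (hne : (interior K).Nonempty)
    (hunc : Unconditional K z) :
    Metric.diam K = 2 * circum K := by
  have hleast := isLeast_radius_of_pointReflection_mem hK.isBounded (hne.mono interior_subset)
    fun _ hx => hunc.pointReflection_mem hx
  rw [circum, hleast.csInf_eq]
  ring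

theorem stmt_1 (K : Set (EuclideanSpace ℝ (Fin 2))) (z : EuclideanSpace ℝ (Fin 2))
    (hK : IsCompact K) (hconv : Convex ℝ K) (hne : (interior K).Nonempty)
    (hunc : Unconditional K z) :
    Metric.diam K = 2 * circum K :=
  stmt_1_general K z hK hne hunc
end

section
/- For any triangle T in the plane, the minimal width satisfies ω(T) ≤ (√3/2) D(T), with equality exactly for equilateral triangles. -/
open MeasureTheory Metric Set Filter
open scoped Topology RealInnerProductSpace

/-! For a unit vector `u`, write the edge vectors of the triangle in the orthonormal frame
`(u, J u)`. Twice the area is a `2 × 2` determinant of two edges; since the three `u`-components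
sum to zero, two of them have the same sign, and expanding along that pair bounds the determinant
by (width in direction `u`) · (diameter). For `u` normal to the longest side this is an equality,
so `minWidth · D = 2 · area`. Heron's formula writes `16 · area²` as
`2(a²b² + b²c² + c²a²) - (a⁴ + b⁴ + c⁴) ≤ 3 D⁴`, with equality exactly when `a = b = c`. -/

section DirectionalWidth

variable {E : Type*} [NormedAddCommGroup E] [InnerProductSpace ℝ E]

noncomputable def directionalWidth (K : Set E) (u : E) : ℝ :=
  sSup ((fun x => ⟪u, x⟫) '' K) - sInf ((fun x => ⟪u, x⟫) '' K)

theorem inner_sub_le_directionalWidth {K : Set E} (hK : IsCompact K) (u : E) {x y : E}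
    (hx : x ∈ K) (hy : y ∈ K) : ⟪u, x - y⟫ ≤ directionalWidth K u := by
  have hf : ContinuousOn (fun x => ⟪u, x⟫) K := (continuous_const.inner continuous_id).continuousOn
  rw [inner_sub_right]
  exact sub_le_sub (le_csSup (hK.bddAbove_image hf) (mem_image_of_mem _ hx))
    (csInf_le (hK.bddBelow_image hf) (mem_image_of_mem _ hy))

theorem abs_inner_sub_le_directionalWidth {K : Set E} (hK : IsCompact K) (u : E) {x y : E}
    (hx : x ∈ K) (hy : y ∈ K) : |⟪u, x - y⟫| ≤ directionalWidth K u := by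
  refine abs_le'.2 ⟨inner_sub_le_directionalWidth hK u hx hy, ?_⟩
  rw [← inner_neg_right, neg_sub]
  exact inner_sub_le_directionalWidth hK u hy hx

theorem directionalWidth_nonneg {K : Set E} (hK : IsCompact K) (hne : K.Nonempty) (u : E) :
    0 ≤ directionalWidth K u := by
  obtain ⟨x, hx⟩ := hne
  simpa using inner_sub_le_directionalWidth hK u hx hx

theorem directionalWidth_le_of_subset_slab {K : Set E} (hne : K.Nonempty) {u : E} {a b : ℝ}
    (h : K ⊆ (innerₛₗ ℝ u) ⁻¹' Icc a b) : directionalWidth K u ≤ b - a :=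
  sub_le_sub (csSup_le (hne.image _) (by rintro _ ⟨x, hx, rfl⟩; exact (h hx).2))
    (le_csInf (hne.image _) (by rintro _ ⟨x, hx, rfl⟩; exact (h hx).1))

theorem directionalWidth_convexHull_triple_le {p q s u : E} (h : ⟪u, q⟫ = ⟪u, p⟫) :
    directionalWidth (convexHull ℝ {p, q, s}) u ≤ |⟪u, s - p⟫| := by
  have hslab : convexHull ℝ {p, q, s} ⊆
      (innerₛₗ ℝ u) ⁻¹' Icc (min ⟪u, p⟫ ⟪u, s⟫) (max ⟪u, p⟫ ⟪u, s⟫) := by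
    refine convexHull_min ?_ ((convex_Icc _ _).linear_preimage _)
    rintro x (rfl | rfl | rfl) <;> simp [h]
  calc directionalWidth (convexHull ℝ {p, q, s}) u
      ≤ max ⟪u, p⟫ ⟪u, s⟫ - min ⟪u, p⟫ ⟪u, s⟫ :=
        directionalWidth_le_of_subset_slab ⟨p, subset_convexHull ℝ _ (mem_insert _ _)⟩ hslab
    _ = |⟪u, s - p⟫| := by rw [max_sub_min_eq_abs', inner_sub_right, abs_sub_comm]

end DirectionalWidth

theorem abs_mul_sub_mul_le_of_mul_nonneg {a b x y D : ℝ} (hab : 0 ≤ a * b) (hx : |x| ≤ D)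
    (hy : |y| ≤ D) : |a * y - x * b| ≤ |a + b| * D :=
  calc |a * y - x * b| ≤ |a| * |y| + |x| * |b| := by
        simpa only [abs_mul] using abs_sub (a * y) (x * b)
    _ ≤ |a| * D + D * |b| := by gcongr
    _ = |a + b| * D := by
        rw [(abs_add_eq_add_abs_iff a b).2 (mul_nonneg_iff.1 hab)]; ring

theorem abs_mul_sub_mul_le_of_add_eq_zero {c₁ c₂ c₃ d₁ d₂ d₃ W D : ℝ}
    (hc : c₁ + c₂ + c₃ = 0) (hd : d₁ + d₂ + d₃ = 0) (hc₁ : |c₁| ≤ W) (hc₂ : |c₂| ≤ W)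
    (hc₃ : |c₃| ≤ W) (hd₁ : |d₁| ≤ D) (hd₂ : |d₂| ≤ D) (hd₃ : |d₃| ≤ D) :
    |c₁ * d₂ - d₁ * c₂| ≤ W * D := by
  have hD : 0 ≤ D := (abs_nonneg _).trans hd₁
  by_cases h₁₂ : 0 ≤ c₁ * c₂
  · calc |c₁ * d₂ - d₁ * c₂| ≤ |c₁ + c₂| * D := abs_mul_sub_mul_le_of_mul_nonneg h₁₂ hd₁ hd₂
      _ ≤ W * D := by rw [show c₁ + c₂ = -c₃ by linarith, abs_neg]; gcongr
  by_cases h₂₃ : 0 ≤ c₂ * c₃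
  · calc |c₁ * d₂ - d₁ * c₂| = |c₂ * d₃ - d₂ * c₃| := by
          congr 1; linear_combination d₂ * hc - c₂ * hd
      _ ≤ |c₂ + c₃| * D := abs_mul_sub_mul_le_of_mul_nonneg h₂₃ hd₂ hd₃
      _ ≤ W * D := by rw [show c₂ + c₃ = -c₁ by linarith, abs_neg]; gcongr
  have h₃₁ : 0 ≤ c₃ * c₁ := by nlinarith [sq_nonneg c₂]
  calc |c₁ * d₂ - d₁ * c₂| = |c₃ * d₁ - d₃ * c₁| := by
        congr 1; linear_combination c₁ * hd - d₁ * hc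
    _ ≤ |c₃ + c₁| * D := abs_mul_sub_mul_le_of_mul_nonneg h₃₁ hd₃ hd₁
    _ ≤ W * D := by rw [show c₃ + c₁ = -c₂ by linarith, abs_neg]; gcongr

theorem heron_le {a b c : ℝ} (ha : 0 ≤ a) (hb : 0 ≤ b) (hc : 0 ≤ c) :
    2 * (a ^ 2 * b ^ 2 + b ^ 2 * c ^ 2 + c ^ 2 * a ^ 2) - (a ^ 4 + b ^ 4 + c ^ 4)
      ≤ 3 * max (max a c) b ^ 4 ∧
    (2 * (a ^ 2 * b ^ 2 + b ^ 2 * c ^ 2 + c ^ 2 * a ^ 2) - (a ^ 4 + b ^ 4 + c ^ 4)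
      = 3 * max (max a c) b ^ 4 ↔ a = b ∧ b = c) := by
  set m := max (max a c) b
  have hS : (a ^ 2 + b ^ 2 + c ^ 2) ^ 2 ≤ 9 * m ^ 4 := by
    have hA : a ^ 2 ≤ m ^ 2 := by gcongr; exact le_max_of_le_left (le_max_left _ _)
    have hB : b ^ 2 ≤ m ^ 2 := by gcongr; exact le_max_right _ _
    have hC : c ^ 2 ≤ m ^ 2 := by gcongr; exact le_max_of_le_left (le_max_right _ _)
    calc (a ^ 2 + b ^ 2 + c ^ 2) ^ 2 ≤ (3 * m ^ 2) ^ 2 := by gcongr; linarith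
      _ = 9 * m ^ 4 := by ring
  have hsplit : 3 * (2 * (a ^ 2 * b ^ 2 + b ^ 2 * c ^ 2 + c ^ 2 * a ^ 2) - (a ^ 4 + b ^ 4 + c ^ 4))
      = (a ^ 2 + b ^ 2 + c ^ 2) ^ 2
        - 2 * ((a ^ 2 - b ^ 2) ^ 2 + (b ^ 2 - c ^ 2) ^ 2 + (c ^ 2 - a ^ 2) ^ 2) := by ring
  refine ⟨by nlinarith [sq_nonneg (a ^ 2 - b ^ 2), sq_nonneg (b ^ 2 - c ^ 2),
    sq_nonneg (c ^ 2 - a ^ 2)], ⟨fun heq => ?_, ?_⟩⟩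
  · have hab : (a ^ 2 - b ^ 2) ^ 2 = 0 := by
      nlinarith [sq_nonneg (b ^ 2 - c ^ 2), sq_nonneg (c ^ 2 - a ^ 2)]
    have hbc : (b ^ 2 - c ^ 2) ^ 2 = 0 := by
      nlinarith [sq_nonneg (a ^ 2 - b ^ 2), sq_nonneg (c ^ 2 - a ^ 2)]
    exact ⟨(pow_left_inj₀ ha hb two_ne_zero).1 (by simpa [sub_eq_zero] using hab),
      (pow_left_inj₀ hb hc two_ne_zero).1 (by simpa [sub_eq_zero] using hbc)⟩
  · rintro ⟨rfl, rfl⟩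
    simp only [m, max_self]
    ring

section Oriented

variable {E : Type*} [NormedAddCommGroup E] [InnerProductSpace ℝ E] [Fact (Module.finrank ℝ E = 2)]
  (o : Orientation ℝ E (Fin 2))

local notation "ω" => o.areaForm

theorem areaForm_sub_sub_rotate (p q s : E) : ω (s - q) (p - q) = ω (q - p) (s - p) := by
  simp only [map_sub, LinearMap.sub_apply, o.areaForm_apply_self]
  rw [o.areaForm_swap s p, o.areaForm_swap s q]
  ring

theorem four_mul_areaForm_sq (p q s : E) :
    4 * ω (q - p) (s - p) ^ 2 =
      2 * (dist p q ^ 2 * dist q s ^ 2 + dist q s ^ 2 * dist p s ^ 2 + dist p s ^ 2 * dist p q ^ 2)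
        - (dist p q ^ 4 + dist q s ^ 4 + dist p s ^ 4) := by
  have hpyth := o.inner_sq_add_areaForm_sq (q - p) (s - p)
  have hcos := norm_sub_sq_real (q - p) (s - p)
  rw [sub_sub_sub_cancel_right] at hcos
  rw [dist_comm p q, dist_comm p s, dist_eq_norm, dist_eq_norm, dist_eq_norm]
  linear_combination
    4 * hpyth - (‖q - p‖ ^ 2 + ‖s - p‖ ^ 2 - ‖q - s‖ ^ 2 + 2 * ⟪q - p, s - p⟫) * hcos

theorem exists_directionalWidth_mul_dist_le {p q : E} (hpq : p ≠ q) (s : E) :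
    ∃ u : E, ‖u‖ = 1 ∧
      directionalWidth (convexHull ℝ {p, q, s}) u * dist p q ≤ |ω (q - p) (s - p)| := by
  have hx : 0 < ‖q - p‖ := norm_pos_iff.2 (sub_ne_zero.2 hpq.symm)
  set u := ‖q - p‖⁻¹ • o.rightAngleRotation (q - p)
  have hperp : ⟪u, q⟫ = ⟪u, p⟫ := by
    rw [← sub_eq_zero, ← inner_sub_right, real_inner_smul_left, o.inner_rightAngleRotation_self,
      mul_zero]
  refine ⟨u, ?_, ?_⟩
  · rw [norm_smul, LinearIsometryEquiv.norm_map, norm_inv, norm_norm, inv_mul_cancel₀ hx.ne']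
  calc directionalWidth (convexHull ℝ {p, q, s}) u * dist p q ≤ |⟪u, s - p⟫| * ‖q - p‖ := by
        rw [dist_comm, dist_eq_norm]
        gcongr
        exact directionalWidth_convexHull_triple_le hperp
    _ = |ω (q - p) (s - p)| := by
        rw [real_inner_smul_left, o.inner_rightAngleRotation_left, abs_mul, abs_inv, abs_norm]
        field_simp

theorem abs_areaForm_le_directionalWidth_mul_diam (p q s : E) {u : E} (hu : ‖u‖ = 1) :
    |ω (q - p) (s - p)| ≤
      directionalWidth (convexHull ℝ {p, q, s}) u * diam (convexHull ℝ {p, q, s}) := by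
  set T := convexHull ℝ {p, q, s}
  have hT : IsCompact T := (Set.toFinite _).isCompact_convexHull ℝ
  have hp : p ∈ T := subset_convexHull ℝ _ (by simp)
  have hq : q ∈ T := subset_convexHull ℝ _ (by simp)
  have hs : s ∈ T := subset_convexHull ℝ _ (by simp)
  have hedge {x y : E} (hx : x ∈ T) (hy : y ∈ T) : |ω u (x - y)| ≤ diam T :=
    calc |ω u (x - y)| ≤ ‖u‖ * ‖x - y‖ := o.abs_areaForm_le _ _
      _ = dist x y := by rw [hu, one_mul, dist_eq_norm]
      _ ≤ diam T := dist_le_diam_of_mem hT.isBounded hx hy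
  have hcross : ω (q - p) (s - p) = ⟪u, q - p⟫ * ω u (s - q) - ω u (q - p) * ⟪u, s - q⟫ := by
    rw [o.inner_mul_areaForm_sub, hu, one_pow, one_mul, ← sub_sub_sub_cancel_right s q p,
      LinearMap.map_sub (ω (q - p)) (s - p) (q - p), o.areaForm_apply_self, sub_zero]
  rw [hcross]
  exact abs_mul_sub_mul_le_of_add_eq_zero (c₃ := ⟪u, p - s⟫) (d₃ := ω u (p - s))
    (by rw [← inner_add_right, ← inner_add_right]; simp) (by rw [← map_add, ← map_add]; simp)
    (abs_inner_sub_le_directionalWidth hT u hq hp) (abs_inner_sub_le_directionalWidth hT u hs hq)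
    (abs_inner_sub_le_directionalWidth hT u hp hs) (hedge hq hp) (hedge hs hq) (hedge hp hs)

theorem exists_directionalWidth_mul_diam_le {p q s : E} (hD : 0 < diam (convexHull ℝ {p, q, s})) :
    ∃ u : E, ‖u‖ = 1 ∧ directionalWidth (convexHull ℝ {p, q, s}) u * diam (convexHull ℝ {p, q, s})
      ≤ |ω (q - p) (s - p)| := by
  rw [convexHull_diam, diam_triple] at hD ⊢
  rcases max_choice (max (dist p q) (dist p s)) (dist q s) with h | h <;> rw [h] at hD ⊢
  · rcases max_choice (dist p q) (dist p s) with h' | h' <;> rw [h'] at hD ⊢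
    · exact exists_directionalWidth_mul_dist_le o (dist_pos.1 hD) s
    · have hrot : ({s, p, q} : Set E) = {p, q, s} := by
        ext; simp only [mem_insert_iff, mem_singleton_iff]; tauto
      rw [dist_comm] at hD ⊢
      simpa only [hrot, ← areaForm_sub_sub_rotate o s p q] using
        exists_directionalWidth_mul_dist_le o (dist_pos.1 hD) q
  · have hrot : ({q, s, p} : Set E) = {p, q, s} := by
      ext; simp only [mem_insert_iff, mem_singleton_iff]; tauto
    simpa only [hrot, areaForm_sub_sub_rotate o p q s] using
      exists_directionalWidth_mul_dist_le o (dist_pos.1 hD) p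

theorem abs_areaForm_le_sqrt_three_div_two_mul_diam_sq (p q s : E) :
    |ω (q - p) (s - p)| ≤ √3 / 2 * diam (convexHull ℝ {p, q, s}) ^ 2 ∧
      (|ω (q - p) (s - p)| = √3 / 2 * diam (convexHull ℝ {p, q, s}) ^ 2 ↔
        dist p q = dist q s ∧ dist q s = dist p s) := by
  obtain ⟨hle, heq⟩ := heron_le (a := dist p q) (b := dist q s) (c := dist p s) dist_nonneg
    dist_nonneg dist_nonneg
  rw [← four_mul_areaForm_sq o p q s] at hle heq
  rw [convexHull_diam, diam_triple, ← heq,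
    ← sq_le_sq₀ (abs_nonneg _) (by positivity),
    ← pow_left_inj₀ (abs_nonneg _) (by positivity) two_ne_zero, sq_abs, mul_pow, div_pow,
    Real.sq_sqrt zero_le_three]
  constructor
  · linarith
  · constructor <;> intro <;> linarith

end Oriented

instance : Fact (Module.finrank ℝ (EuclideanSpace ℝ (Fin 2)) = 2) := ⟨finrank_euclideanSpace_fin⟩

theorem minWidth_le_directionalWidth {K : Set (EuclideanSpace ℝ (Fin 2))} (hK : IsCompact K)
    (hne : K.Nonempty) {u : EuclideanSpace ℝ (Fin 2)} (hu : ‖u‖ = 1) :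
    minWidth K ≤ directionalWidth K u :=
  csInf_le ⟨0, by rintro _ ⟨v, -, rfl⟩; exact directionalWidth_nonneg hK hne v⟩ ⟨u, hu, rfl⟩

theorem le_minWidth {K : Set (EuclideanSpace ℝ (Fin 2))} {c : ℝ}
    (h : ∀ u : EuclideanSpace ℝ (Fin 2), ‖u‖ = 1 → c ≤ directionalWidth K u) : c ≤ minWidth K :=
  le_csInf ⟨_, EuclideanSpace.single 0 1, by simp, rfl⟩ (by rintro _ ⟨u, hu, rfl⟩; exact h u hu)

theorem minWidth_convexHull_triple_mul_diam (o : Orientation ℝ (EuclideanSpace ℝ (Fin 2)) (Fin 2))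
    (p q s : EuclideanSpace ℝ (Fin 2)) :
    minWidth (convexHull ℝ {p, q, s}) * diam (convexHull ℝ {p, q, s}) =
      |o.areaForm (q - p) (s - p)| := by
  set T := convexHull ℝ {p, q, s}
  have hlower {u : EuclideanSpace ℝ (Fin 2)} (hu : ‖u‖ = 1) :=
    abs_areaForm_le_directionalWidth_mul_diam o p q s hu
  rcases (diam_nonneg (s := T)).eq_or_lt with hD | hD
  · have h := hlower (u := EuclideanSpace.single 0 1) (by simp)
    rw [← hD, mul_zero] at h ⊢
    exact (le_antisymm h (abs_nonneg _)).symm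
  obtain ⟨u, hu, hupper⟩ := exists_directionalWidth_mul_diam_le o hD
  refine le_antisymm ?_ ?_
  · refine le_trans ?_ hupper
    gcongr
    exact minWidth_le_directionalWidth ((Set.toFinite _).isCompact_convexHull ℝ)
      ⟨p, subset_convexHull ℝ _ (mem_insert _ _)⟩ hu
  · rw [← div_le_iff₀ hD]
    exact le_minWidth fun u hu => (div_le_iff₀ hD).2 (hlower hu)

theorem stmt_4 (p q s : EuclideanSpace ℝ (Fin 2))
    (hind : AffineIndependent ℝ ![p, q, s])
    (T : Set (EuclideanSpace ℝ (Fin 2))) (hT : T = convexHull ℝ {p, q, s}) :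
    minWidth T ≤ Real.sqrt 3 / 2 * Metric.diam T ∧
      (minWidth T = Real.sqrt 3 / 2 * Metric.diam T ↔
        (dist p q = dist q s ∧ dist q s = dist p s)) := by
  subst hT
  set o := (EuclideanSpace.basisFun (Fin 2) ℝ).toBasis.orientation
  have hD : 0 < diam (convexHull ℝ {p, q, s}) := by
    rw [convexHull_diam, diam_triple]
    exact lt_max_of_lt_left (lt_max_of_lt_left (dist_pos.2
      (by simpa using hind.injective.ne (show (0 : Fin 3) ≠ 1 by decide))))
  have hw := minWidth_convexHull_triple_mul_diam o p q s
  obtain ⟨hle, heq⟩ := abs_areaForm_le_sqrt_three_div_two_mul_diam_sq o p q s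
  rw [← hw, sq, ← mul_assoc] at hle heq
  exact ⟨le_of_mul_le_mul_right hle hD, (mul_left_inj' hD.ne').symm.trans heq⟩
end

section
/- Let A, B, B' be positive real numbers with B' ≤ B, and set C = BB'/A, b = √(B²+C²), a = bA/B. Then a + b ≤ A + B + C. -/
open MeasureTheory Metric Set Filter
open scoped Topology RealInnerProductSpace

/- Since `a + b = b (A + B) / B`, the claim is `√(B² + C²) (A + B) ≤ B (A + B + C)`. After squaring,
the difference of the two sides is `C (B² - C A)(A + 2B) + C A B²`, which is nonnegative because
`C A = B B' ≤ B²`. -/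

theorem sqrt_sq_add_sq_mul_add_le {A B C : ℝ} (hA : 0 ≤ A) (hB : 0 ≤ B) (hC : 0 ≤ C)
    (hCA : C * A ≤ B ^ 2) :
    Real.sqrt (B ^ 2 + C ^ 2) * (A + B) ≤ B * (A + B + C) := by
  refine (pow_le_pow_iff_left₀ (by positivity) (by positivity) two_ne_zero).1 ?_
  rw [mul_pow, Real.sq_sqrt (by positivity)]
  nlinarith [mul_nonneg hC (mul_nonneg (sub_nonneg.2 hCA) (by positivity : 0 ≤ A + 2 * B)),
    mul_nonneg (mul_nonneg hC hA) (sq_nonneg B)]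

theorem stmt_10 (A B B' : ℝ) (hA : 0 < A) (hB : 0 < B) (hB' : 0 < B')
    (hBB : B' ≤ B) (C b a : ℝ) (hC : C = B * B' / A)
    (hb : b = Real.sqrt (B ^ 2 + C ^ 2)) (ha : a = b * A / B) :
    a + b ≤ A + B + C := by
  have hC0 : 0 ≤ C := by rw [hC]; positivity
  have hCA : C * A ≤ B ^ 2 := by
    rw [hC, div_mul_cancel₀ _ hA.ne', sq]
    exact mul_le_mul_of_nonneg_left hBB hB.le
  calc a + b = b * (A + B) / B := by rw [ha]; field_simp
    _ ≤ B * (A + B + C) / B := by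
      rw [hb]
      exact div_le_div_of_nonneg_right (sqrt_sq_add_sq_mul_add_le hA.le hB.le hC0 hCA) hB.le
    _ = A + B + C := by field_simp
end

section
/- The equilateral triangle with vertices (−1/√3, 0), (1 + 1/√3, 0), and (1/2, 1 + √3/2) is lattice-free and satisfies p(T) − 2D(T) = 1 + 2/√3. -/
open MeasureTheory Metric Set Filter
open scoped Topology RealInnerProductSpace

/-!
The triangle is cut out by the three half-planes `⟪nᵢ, x⟫ ≤ cᵢ` carrying its sides, so its
interior is given by the strict inequalities. An interior lattice point `(m, n)` would need
`n ≥ 1` (bottom side), then `√3 m > n - 1 ≥ 0`, i.e. `m ≥ 1` (left side), and then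
`√3 m + n ≥ √3 + 1` contradicts the right side.

The boundary is the union of the three sides, which pairwise meet in a single vertex, so its
one-dimensional Hausdorff measure is the sum `3L` of the side lengths `L = 1 + 2/√3`; the
diameter of a convex hull is that of its vertex set, which is `L`.
-/

section Polyhedron

variable {E ι : Type*} [AddCommGroup E] [Module ℝ E] [TopologicalSpace E] [ContinuousAdd E]
  [ContinuousSMul ℝ E] [Finite ι] {f : ι → StrongDual ℝ E}

theorem interior_setOf_forall_le (hf : ∀ i, f i ≠ 0) (c : ι → ℝ) :
    interior {x | ∀ i, f i x ≤ c i} = {x | ∀ i, f i x < c i} := by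
  have h : {x | ∀ i, f i x ≤ c i} = ⋂ i, f i ⁻¹' Iic (c i) := by ext; simp
  ext x
  simp [h, interior_iInter_of_finite,
    ← ((f _).isOpenMap_of_ne_zero (hf _)).preimage_interior_eq_interior_preimage (f _).continuous]

theorem frontier_setOf_forall_le (hf : ∀ i, f i ≠ 0) (c : ι → ℝ) :
    frontier {x | ∀ i, f i x ≤ c i} = {x | (∀ i, f i x ≤ c i) ∧ ∃ i, f i x = c i} := by
  have hclosed : IsClosed {x | ∀ i, f i x ≤ c i} := by
    simpa only [ofPred_forall] using
      isClosed_iInter fun i => isClosed_le (f i).continuous continuous_const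
  rw [hclosed.frontier_eq, interior_setOf_forall_le hf]
  ext x
  simp only [Set.mem_sdiff, mem_ofPred_eq, not_forall, not_lt]
  exact and_congr_right fun hle => exists_congr fun i => ⟨(hle i).antisymm, ge_of_eq⟩

end Polyhedron

section Segment

variable {E : Type*} [AddCommGroup E] [Module ℝ E] {f : E →ₗ[ℝ] ℝ} {r : ℝ}

theorem sep_convexJoin_singleton_eq {p : E} {s : Set E} (hp : f p < r)
    (hs : ∀ y ∈ s, f y = r) :
    {x ∈ convexJoin ℝ {p} s | f x = r} = s := by
  ext x
  refine ⟨?_, fun hx => ⟨subset_convexJoin_right (singleton_nonempty p) hx, hs x hx⟩⟩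
  rintro ⟨hx, hfx⟩
  obtain ⟨y, hy, a, b, ha, hb, hab, rfl⟩ := by simpa [convexJoin_singleton_left] using hx
  have hfy := hs y hy
  simp only [map_add, map_smul, smul_eq_mul, hfy] at hfx
  have ha0 : a = 0 := by
    have h : a * (r - f p) = 0 := by linear_combination -hfx + r * hab
    exact (mul_eq_zero.1 h).resolve_right (sub_ne_zero.2 hp.ne')
  obtain rfl : b = 1 := by linarith
  simpa [ha0] using hy

theorem sep_convexHull_triple_eq_segment {p a b : E} (hp : f p < r) (ha : f a = r)
    (hb : f b = r) :
    {x ∈ convexHull ℝ {p, a, b} | f x = r} = segment ℝ a b := by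
  rw [convexHull_insert (insert_nonempty _ _), convexHull_pair]
  refine sep_convexJoin_singleton_eq hp ?_
  rintro y ⟨s, t, -, -, hst, rfl⟩
  simp only [map_add, map_smul, smul_eq_mul, ha, hb]
  rw [← add_mul, hst, one_mul]

theorem subsingleton_sep_segment {a b : E} (hab : f a ≠ f b) :
    {x ∈ segment ℝ a b | f x = r}.Subsingleton := by
  rintro _ ⟨⟨s, t, -, -, hst, rfl⟩, hx⟩ _ ⟨⟨s', t', -, -, hst', rfl⟩, hy⟩
  simp only [map_add, map_smul, smul_eq_mul] at hx hy
  have ht : t = t' := by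
    have : (t - t') * (f b - f a) = 0 := by
      rw [eq_sub_of_add_eq hst, eq_sub_of_add_eq hst'] at *; linear_combination hx - hy
    simpa [sub_eq_zero, hab.symm] using this
  obtain rfl : s = s' := by linarith
  rw [ht]

end Segment

theorem hausdorffMeasure_iUnion_segment {E ι : Type*} [NormedAddCommGroup E] [NormedSpace ℝ E]
    [MeasurableSpace E] [BorelSpace E] [Countable ι] {a b : ι → E}
    (h : Pairwise fun i j => (segment ℝ (a i) (b i) ∩ segment ℝ (a j) (b j)).Countable) :
    μH[1] (⋃ i, segment ℝ (a i) (b i)) = ∑' i, edist (a i) (b i) := by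
  have := Measure.nullSingletonClass_hausdorff E one_pos
  rw [measure_iUnion₀ (fun i j hij => (h hij).measure_zero _)]
  · simp only [hausdorffMeasure_segment]
  · intro i
    rw [← convexHull_pair]
    exact (toFinite _).isCompact_convexHull (𝕜 := ℝ).isClosed.measurableSet.nullMeasurableSet

theorem range_fin_three {α : Type*} (v : Fin 3 → α) (i : Fin 3) :
    range v = {v i, v (i + 1), v (i + 2)} := by
  ext x
  simp only [mem_range, mem_insert_iff, mem_singleton_iff]
  constructor
  · rintro ⟨j, rfl⟩
    fin_cases i <;> fin_cases j <;> simp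
  · rintro (rfl | rfl | rfl) <;> exact ⟨_, rfl⟩

section Triangle

/- A triangle given both by its vertices `v` and by the half-planes `f i ≤ c i`, side `i` being
opposite to `v i`. -/
variable {E : Type*} [NormedAddCommGroup E] [NormedSpace ℝ E] {v : Fin 3 → E}
  {f : Fin 3 → StrongDual ℝ E} {c : Fin 3 → ℝ}

theorem convexHull_range_eq_setOf_forall_le (hside : ∀ i j, i ≠ j → f i (v j) = c i)
    (hopp : ∀ i, f i (v i) < c i) (hsub : {x | ∀ i, f i x ≤ c i} ⊆ convexHull ℝ (range v)) :
    convexHull ℝ (range v) = {x | ∀ i, f i x ≤ c i} := by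
  refine (convexHull_min ?_ ?_).antisymm hsub
  · rintro _ ⟨j, rfl⟩ i
    rcases eq_or_ne i j with rfl | hij
    exacts [(hopp i).le, (hside i j hij).le]
  · simpa only [ofPred_forall, ContinuousLinearMap.coe_coe] using
      convex_iInter fun i => convex_halfSpace_le (f i).toLinearMap.isLinear (c i)

theorem ne_zero_of_lt_of_eq (hside : ∀ i j, i ≠ j → f i (v j) = c i)
    (hopp : ∀ i, f i (v i) < c i) (i : Fin 3) : f i ≠ 0 := by
  rintro h
  have h₁ := hside i (i + 1) (by fin_cases i <;> decide)
  have h₂ := hopp i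
  simp only [h, zero_apply] at h₁ h₂
  linarith

theorem sep_convexHull_range_eq_segment (hside : ∀ i j, i ≠ j → f i (v j) = c i)
    (hopp : ∀ i, f i (v i) < c i) (i : Fin 3) :
    {x ∈ convexHull ℝ (range v) | f i x = c i} = segment ℝ (v (i + 1)) (v (i + 2)) := by
  rw [range_fin_three v i]
  exact sep_convexHull_triple_eq_segment (f := (f i : E →ₗ[ℝ] ℝ)) (hopp i)
    (hside i _ (by fin_cases i <;> decide)) (hside i _ (by fin_cases i <;> decide))

theorem interior_convexHull_range_eq (hside : ∀ i j, i ≠ j → f i (v j) = c i)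
    (hopp : ∀ i, f i (v i) < c i) (hsub : {x | ∀ i, f i x ≤ c i} ⊆ convexHull ℝ (range v)) :
    interior (convexHull ℝ (range v)) = {x | ∀ i, f i x < c i} := by
  rw [convexHull_range_eq_setOf_forall_le hside hopp hsub,
    interior_setOf_forall_le (ne_zero_of_lt_of_eq hside hopp)]

theorem frontier_convexHull_range_eq (hside : ∀ i j, i ≠ j → f i (v j) = c i)
    (hopp : ∀ i, f i (v i) < c i) (hsub : {x | ∀ i, f i x ≤ c i} ⊆ convexHull ℝ (range v)) :
    frontier (convexHull ℝ (range v)) = ⋃ i, segment ℝ (v (i + 1)) (v (i + 2)) := by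
  simp_rw [← sep_convexHull_range_eq_segment hside hopp,
    convexHull_range_eq_setOf_forall_le hside hopp hsub,
    frontier_setOf_forall_le (ne_zero_of_lt_of_eq hside hopp)]
  ext x
  simp

theorem hausdorffMeasure_frontier_convexHull_range [MeasurableSpace E] [BorelSpace E]
    (hside : ∀ i j, i ≠ j → f i (v j) = c i)
    (hopp : ∀ i, f i (v i) < c i) (hsub : {x | ∀ i, f i x ≤ c i} ⊆ convexHull ℝ (range v)) :
    μH[1] (frontier (convexHull ℝ (range v))) = ∑ i, edist (v (i + 1)) (v (i + 2)) := by
  rw [frontier_convexHull_range_eq hside hopp hsub, hausdorffMeasure_iUnion_segment, tsum_fintype]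
  intro i j hij
  have hsep : segment ℝ (v (i + 1)) (v (i + 2)) ∩ segment ℝ (v (j + 1)) (v (j + 2)) ⊆
      {x ∈ segment ℝ (v (i + 1)) (v (i + 2)) | (f j : E →ₗ[ℝ] ℝ) x = c j} := by
    rintro x ⟨hxi, hxj⟩
    rw [← sep_convexHull_range_eq_segment hside hopp] at hxj
    exact ⟨hxi, hxj.2⟩
  refine (Subsingleton.anti (subsingleton_sep_segment ?_) hsep).countable
  -- exactly one endpoint of side `i` is `v j`, the only vertex off side `j`
  have hne : i + 1 ≠ i + 2 := by fin_cases i <;> decide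
  have hj : j = i + 1 ∨ j = i + 2 := by revert hij; fin_cases i <;> fin_cases j <;> decide
  rcases hj with rfl | rfl
  · exact ((hopp _).trans_eq (hside _ _ hne).symm).ne
  · exact ((hopp _).trans_eq (hside _ _ hne.symm).symm).ne'

end Triangle

theorem inner_toLp_two (a b : ℝ) (x : EuclideanSpace ℝ (Fin 2)) :
    ⟪(!₂[a, b] : EuclideanSpace ℝ (Fin 2)), x⟫ = a * x 0 + b * x 1 := by
  simp [PiLp.inner_apply, Fin.sum_univ_two, mul_comm]

namespace EquilateralTriangle

open Real

/- Side `i` lies on the line `⟪normal i, x⟫ = level i` and is opposite to `vertex i`. The normals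
have length 2 and sum to zero. -/
noncomputable def vertex : Fin 3 → EuclideanSpace ℝ (Fin 2) :=
  ![!₂[-(1 / √3), 0], !₂[1 + 1 / √3, 0], !₂[1 / 2, 1 + √3 / 2]]

noncomputable def normal : Fin 3 → EuclideanSpace ℝ (Fin 2) :=
  ![!₂[√3, 1], !₂[-√3, 1], !₂[0, -2]]

noncomputable def level : Fin 3 → ℝ := ![√3 + 1, 1, 0]

theorem sqrt_three_pos : 0 < √3 := by positivity

theorem sq_sqrt_three : √3 ^ 2 = 3 := sq_sqrt (by norm_num)

theorem inner_normal_vertex_of_ne {i j : Fin 3} (hij : i ≠ j) :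
    innerSL ℝ (normal i) (vertex j) = level i := by
  have := sqrt_three_pos
  fin_cases i <;> fin_cases j <;>
    simp only [normal, vertex, level, coe_innerSL_apply, inner_toLp_two, ne_eq, Fin.reduceEq,
      not_true_eq_false, Fin.isValue, Fin.zero_eta, Fin.mk_one, Fin.reduceFinMk,
      Matrix.cons_val_zero, Matrix.cons_val_one, Matrix.cons_val,
      Matrix.cons_val_fin_one] at hij ⊢ <;>
    field_simp <;> ring

theorem inner_normal_vertex_lt (i : Fin 3) : innerSL ℝ (normal i) (vertex i) < level i := by
  have := sqrt_three_pos
  fin_cases i <;>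
    simp only [normal, vertex, level, coe_innerSL_apply, inner_toLp_two, Fin.isValue, Fin.zero_eta,
      Fin.mk_one, Fin.reduceFinMk, Matrix.cons_val_zero, Matrix.cons_val_one, Matrix.cons_val,
      Matrix.cons_val_fin_one] <;>
    field_simp <;> nlinarith [sq_sqrt_three]

theorem setOf_forall_inner_le_subset :
    {x | ∀ i, innerSL ℝ (normal i) x ≤ level i} ⊆ convexHull ℝ (range vertex) := by
  intro x hx
  have h2 : 0 < 2 + √3 := by positivity
  -- barycentric coordinates: `2 + √3 = level i - ⟪normal i, vertex i⟫` for every `i`, and the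
  -- weights sum to `1` because the normals sum to zero
  set w : Fin 3 → ℝ := fun i => (level i - innerSL ℝ (normal i) x) / (2 + √3) with hw
  have hx_eq : x = ∑ i, w i • vertex i := by
    ext k
    fin_cases k <;>
      simp only [hw, Fin.sum_univ_three, normal, vertex, level, coe_innerSL_apply, inner_toLp_two,
        PiLp.add_apply, PiLp.smul_apply, smul_eq_mul, Fin.isValue, Fin.zero_eta, Fin.mk_one,
        Matrix.cons_val_zero, Matrix.cons_val_one, Matrix.cons_val, Matrix.cons_val_fin_one] <;>
      field_simp <;> ring
  rw [hx_eq]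
  refine (convex_convexHull ℝ _).sum_mem (fun i _ => div_nonneg (sub_nonneg.2 (hx i)) h2.le) ?_
    fun i _ => subset_convexHull ℝ _ (mem_range_self i)
  simp only [hw, Fin.sum_univ_three, normal, level, coe_innerSL_apply, inner_toLp_two, Fin.isValue,
    Matrix.cons_val_zero, Matrix.cons_val_one, Matrix.cons_val]
  field_simp
  ring

theorem interior_convexHull_vertex :
    interior (convexHull ℝ (range vertex)) = {x | ∀ i, innerSL ℝ (normal i) x < level i} :=
  interior_convexHull_range_eq (fun _ _ => inner_normal_vertex_of_ne) inner_normal_vertex_lt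
    setOf_forall_inner_le_subset

theorem latticeFree_convexHull_vertex : LatticeFree (convexHull ℝ (range vertex)) := by
  intro m n hmn
  rw [interior_convexHull_vertex] at hmn
  have h₀ := hmn 0
  have h₁ := hmn 1
  have h₂ := hmn 2
  simp only [normal, level, coe_innerSL_apply, inner_toLp_two, Fin.isValue, Matrix.cons_val_zero,
    Matrix.cons_val_one, Matrix.cons_val, Matrix.cons_val_fin_one] at h₀ h₁ h₂
  have hn : (1 : ℝ) ≤ n := Int.cast_one_le_of_pos (Int.cast_pos.1 (show (0 : ℝ) < n by linarith))
  have hm : (1 : ℝ) ≤ m :=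
    Int.cast_one_le_of_pos (Int.cast_pos.1 (show (0 : ℝ) < m by nlinarith [sqrt_three_pos]))
  nlinarith [sqrt_three_pos]

theorem dist_vertex_of_ne {i j : Fin 3} (hij : i ≠ j) :
    dist (vertex i) (vertex j) = 1 + 2 / √3 := by
  have := sqrt_three_pos
  rw [EuclideanSpace.dist_eq, sqrt_eq_iff_eq_sq (by positivity) (by positivity)]
  fin_cases i <;> fin_cases j <;>
    simp only [vertex, Fin.sum_univ_two, Real.dist_eq, sq_abs, ne_eq, Fin.reduceEq,
      not_true_eq_false, Fin.isValue, Fin.zero_eta, Fin.mk_one, Fin.reduceFinMk,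
      Matrix.cons_val_zero, Matrix.cons_val_one, Matrix.cons_val,
      Matrix.cons_val_fin_one] at hij ⊢ <;>
    field_simp <;> grind [sq_sqrt_three]

theorem perim_convexHull_vertex : perim (convexHull ℝ (range vertex)) = 3 * (1 + 2 / √3) := by
  rw [perim, hausdorffMeasure_frontier_convexHull_range (fun _ _ => inner_normal_vertex_of_ne)
    inner_normal_vertex_lt setOf_forall_inner_le_subset,
    ENNReal.toReal_sum fun _ _ => edist_ne_top _ _]
  simp only [← dist_edist, Fin.sum_univ_three]
  rw [dist_vertex_of_ne (by decide), dist_vertex_of_ne (by decide), dist_vertex_of_ne (by decide)]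
  ring

theorem diam_convexHull_vertex : diam (convexHull ℝ (range vertex)) = 1 + 2 / √3 := by
  rw [convexHull_diam, range_fin_three vertex 0, diam_triple]
  simp [dist_vertex_of_ne]

end EquilateralTriangle

theorem stmt_17 (T : Set (EuclideanSpace ℝ (Fin 2)))
    (hT : T = convexHull ℝ
      {(!₂[-(1 / Real.sqrt 3), 0] : EuclideanSpace ℝ (Fin 2)),
        !₂[1 + 1 / Real.sqrt 3, 0], !₂[1 / 2, 1 + Real.sqrt 3 / 2]}) :
    LatticeFree T ∧
      perim T - 2 * Metric.diam T = 1 + 2 / Real.sqrt 3 := by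
  obtain rfl : T = convexHull ℝ (range EquilateralTriangle.vertex) := by
    rw [hT, range_fin_three EquilateralTriangle.vertex 0]
    rfl
  refine ⟨EquilateralTriangle.latticeFree_convexHull_vertex, ?_⟩
  rw [EquilateralTriangle.perim_convexHull_vertex, EquilateralTriangle.diam_convexHull_vertex]
  ring
end
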